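/- arXiv:2010.05733 — 7 statements merged into one kernel-verified Lean document; each statement's English description precedes it below -/
import Mathlib

section
/- Let G be a graph and let (x,y) and (z,w) be two distinct comparable ordered pairs of vertices of G with (x,y) ~nt (z,w). Then {x,y} ∩ {z,w} = ∅. -/
open SimpleGraph

/-- The closed neighborhood `N_G[v]` of a vertex `v`. -/
def closedNbhd {V : Type*} (G : SimpleGraph V) (v : V) : Set V :=
  insert v (G.neighborSet v)

/-- An ordered pair `(x, y)` is comparable if `N_G[x] ⊆ N_G[y]`. -/
def ComparablePair {V : Type*} (G : SimpleGraph V) (x y : V) : Prop :=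
  closedNbhd G x ⊆ closedNbhd G y

/-- `(x, y) ~mt (z, w)`: matched twins. -/
def MatchedTwins {V : Type*} (G : SimpleGraph V) (x y z w : V) : Prop :=
  closedNbhd G x \ {y} = closedNbhd G z \ {w} ∧
  closedNbhd G y \ {x} = closedNbhd G w \ {z}

/-- `(x, y) ~nt (z, w)`: nested twins. -/
def NestedTwins {V : Type*} (G : SimpleGraph V) (x y z w : V) : Prop :=
  G.neighborSet x \ {y} = G.neighborSet z \ {w} ∧
  closedNbhd G y \ {x} = closedNbhd G w \ {z}

/-- The square `H²` of a graph: two distinct vertices are adjacent iff they are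
at distance at most two in `H`. -/
def squareGraph {V : Type*} (H : SimpleGraph V) : SimpleGraph V where
  Adj u v := u ≠ v ∧ (H.Adj u v ∨ ∃ w, H.Adj u w ∧ H.Adj w v)
  symm := by
    constructor
    rintro u v ⟨hne, h⟩
    refine ⟨hne.symm, ?_⟩
    rcases h with h | ⟨w, h1, h2⟩
    · exact Or.inl h.symm
    · exact Or.inr ⟨w, h2.symm, h1.symm⟩
  loopless := by constructor; rintro u ⟨hne, _⟩; exact hne rfl

/-- `F` is (isomorphic to) a disjoint union `pK₁ + qK₂`: it has maximum degree at most
one, `p` vertices of degree zero and `q` edges. -/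
def IsDisjUnionK1K2 {W : Type*} (F : SimpleGraph W) (p q : ℕ) : Prop :=
  (∀ u v w : W, F.Adj u v → F.Adj u w → v = w) ∧
  {v : W | ∀ w, ¬ F.Adj v w}.ncard = p ∧
  F.edgeSet.ncard = q

/-- `ab` is an `S`-matching edge of type 1 in `H`. -/
def Type1Edge {V : Type*} (H : SimpleGraph V) (S : Set V) (a b : V) : Prop :=
  a ∉ S ∧ b ∉ S ∧ H.Adj a b ∧
  H.neighborSet a ∩ S = ∅ ∧ (H.neighborSet b ∩ S).Nonempty

/-- `ab` is an `S`-matching edge of type 2 in `H`. -/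
def Type2Edge {V : Type*} (H : SimpleGraph V) (S : Set V) (a b : V) : Prop :=
  a ∉ S ∧ b ∉ S ∧ H.Adj a b ∧
  (H.neighborSet a ∩ S).Nonempty ∧ (H.neighborSet b ∩ S).Nonempty ∧
  H.neighborSet a ∩ H.neighborSet b ∩ S = ∅

/-- `ab` is an `S`-matching edge of type 3 in `H`. -/
def Type3Edge {V : Type*} (H : SimpleGraph V) (S : Set V) (a b : V) : Prop :=
  a ∉ S ∧ b ∉ S ∧ H.Adj a b ∧
  (H.neighborSet a ∩ H.neighborSet b ∩ S).Nonempty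

theorem Set.notMem_of_diff_singleton_eq {α : Type*} {s t : Set α} {a b : α}
    (h : s \ {a} = t \ {b}) (hab : a ≠ b) : a ∉ t := fun ha =>
  (h ▸ ⟨ha, hab⟩ : a ∈ s \ {a}).2 rfl

section

variable {V : Type*} {G : SimpleGraph V} {x y z w : V}

theorem mem_closedNbhd_self : x ∈ closedNbhd G x :=
  Set.mem_insert x _

theorem ComparablePair.mem_closedNbhd (h : ComparablePair G x y) : x ∈ closedNbhd G y :=
  h mem_closedNbhd_self

theorem ComparablePair.eq_of_notMem_neighborSet (h : ComparablePair G x y)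
    (hy : y ∉ G.neighborSet x) : x = y :=
  h.mem_closedNbhd.resolve_right fun hadj => hy hadj.symm

/-- If `x = z`, the first twin condition forces `y, w ∉ N(x)`, so both pairs collapse
to `(x, x)`. -/
theorem NestedTwins.fst_ne (hxy : ComparablePair G x y) (hzw : ComparablePair G z w)
    (hne : (x, y) ≠ (z, w)) (h : NestedTwins G x y z w) : x ≠ z := by
  rintro rfl
  have hyw : y ≠ w := fun hyw => hne (hyw ▸ rfl)
  have hy : x = y := hxy.eq_of_notMem_neighborSet (Set.notMem_of_diff_singleton_eq h.1 hyw)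
  have hw : x = w :=
    hzw.eq_of_notMem_neighborSet (Set.notMem_of_diff_singleton_eq h.1.symm hyw.symm)
  exact hyw (hy.symm.trans hw)

end

theorem stmt1_general {V : Type*} (G : SimpleGraph V) (x y z w : V)
    (hxy : ComparablePair G x y) (hzw : ComparablePair G z w)
    (hne : (x, y) ≠ (z, w)) (hnt : NestedTwins G x y z w) :
    ({x, y} : Set V) ∩ {z, w} = ∅ := by
  have hxz : x ≠ z := hnt.fst_ne hxy hzw hne
  have hx : x ∉ closedNbhd G w := Set.notMem_of_diff_singleton_eq hnt.2 hxz
  have hz : z ∉ closedNbhd G y := Set.notMem_of_diff_singleton_eq hnt.2.symm hxz.symm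
  have hxw : x ≠ w := fun h => hx (h ▸ mem_closedNbhd_self)
  have hyz : y ≠ z := fun h => hz (h ▸ mem_closedNbhd_self)
  have hyw : y ≠ w := fun h => hz (h ▸ hzw.mem_closedNbhd)
  ext v
  simp only [Set.mem_inter_iff, Set.mem_insert_iff, Set.mem_singleton_iff,
    Set.mem_empty_iff_false, iff_false]
  rintro ⟨rfl | rfl, rfl | rfl⟩ <;> contradiction

theorem stmt1 {V : Type*} [Fintype V] (G : SimpleGraph V) (x y z w : V)
    (hxy : ComparablePair G x y) (hzw : ComparablePair G z w)
    (hne : (x, y) ≠ (z, w)) (hnt : NestedTwins G x y z w) :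
    ({x, y} : Set V) ∩ {z, w} = ∅ :=
  stmt1_general G x y z w hxy hzw hne hnt
end

section
/- Let G be a graph and let (x,y) and (z,w) be two distinct ordered pairs of adjacent vertices of G with (x,y) ~mt (z,w). Then the graphs G − {x,y} and G − {z,w} are isomorphic. -/
open SimpleGraph

/-!
Matched twins `(x, y) ~mt (z, w)` with `xy` and `zw` edges and `(x, y) ≠ (z, w)` force the four
vertices to be distinct, and then the permutation exchanging `x ↔ z` and `y ↔ w` is an
automorphism of `G`: the twin condition says that it carries the neighbors of `x` to neighbors
of `z`, and the symmetries `(x, y, z, w) ↦ (z, w, x, y)` and `(x, y, z, w) ↦ (y, x, w, z)` of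
both the condition and the permutation give the same for `y`, `z` and `w`. This automorphism
maps `{x, y}` onto `{z, w}`, hence restricts to an isomorphism `G - {x, y} ≃g G - {z, w}`.
-/

section twinSwap

open Equiv

variable {V : Type*} [DecidableEq V] {x y z w : V}

def twinSwap (x y z w : V) : Perm V := swap x z * swap y w

theorem twinSwap_comm : twinSwap z w x y = twinSwap x y z w := by
  simp only [twinSwap, swap_comm z x, swap_comm w y]

theorem twinSwap_flip (h : [x, z, y, w].Nodup) : twinSwap y x w z = twinSwap x y z w :=
  (Perm.disjoint_swap_swap h).commute.eq.symm

theorem twinSwap_involutive (h : [x, z, y, w].Nodup) : Function.Involutive (twinSwap x y z w) := by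
  intro v
  rw [← Perm.mul_apply, twinSwap, ← sq, (Perm.disjoint_swap_swap h).commute.mul_pow, sq, sq,
    swap_mul_self, swap_mul_self, one_mul, Perm.one_apply]

theorem twinSwap_apply_left (hxy : x ≠ y) (hxw : x ≠ w) : twinSwap x y z w x = z := by
  rw [twinSwap, Perm.mul_apply, swap_apply_of_ne_of_ne hxy hxw, swap_apply_left]

theorem twinSwap_apply_of_ne {v : V} (hx : v ≠ x) (hy : v ≠ y) (hz : v ≠ z) (hw : v ≠ w) :
    twinSwap x y z w v = v := by
  rw [twinSwap, Perm.mul_apply, swap_apply_of_ne_of_ne hy hw, swap_apply_of_ne_of_ne hx hz]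

end twinSwap

namespace MatchedTwins

variable {V : Type*} {G : SimpleGraph V} {x y z w : V}

theorem symm (h : MatchedTwins G x y z w) : MatchedTwins G z w x y :=
  ⟨h.1.symm, h.2.symm⟩

theorem flip (h : MatchedTwins G x y z w) : MatchedTwins G y x w z :=
  ⟨h.2, h.1⟩

theorem mem_iff (h : MatchedTwins G x y z w) (u : V) :
    (u = x ∨ G.Adj x u) ∧ u ≠ y ↔ (u = z ∨ G.Adj z u) ∧ u ≠ w :=
  Set.ext_iff.mp h.1 u

theorem ne_fourth (h : MatchedTwins G x y z w) (hxy : x ≠ y) : x ≠ w :=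
  ((h.mem_iff x).1 ⟨.inl rfl, hxy⟩).2

theorem adj_third (h : MatchedTwins G x y z w) (hxy : x ≠ y) (hxz : x ≠ z) : G.Adj z x :=
  ((h.mem_iff x).1 ⟨.inl rfl, hxy⟩).1.resolve_left hxz

theorem not_adj_fourth (h : MatchedTwins G x y z w) (hyw : y ≠ w) : ¬ G.Adj x w :=
  fun hxw ↦ ((h.mem_iff w).1 ⟨.inr hxw, hyw.symm⟩).2 rfl

theorem adj_iff_adj_of_ne (h : MatchedTwins G x y z w) {u : V} (hx : u ≠ x) (hy : u ≠ y)
    (hz : u ≠ z) (hw : u ≠ w) : G.Adj x u ↔ G.Adj z u := by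
  have := h.mem_iff u
  tauto

theorem eq_fourth_of_eq_third (h : MatchedTwins G x y z w) (hxy : G.Adj x y) (hxz : x = z) :
    y = w := by
  subst hxz
  by_contra hyw
  exact ((h.mem_iff y).2 ⟨.inr hxy, hyw⟩).2 rfl

theorem eq_third_iff_eq_fourth (h : MatchedTwins G x y z w) (hxy : G.Adj x y) :
    x = z ↔ y = w :=
  ⟨h.eq_fourth_of_eq_third hxy, h.flip.eq_fourth_of_eq_third hxy.symm⟩

theorem nodup (h : MatchedTwins G x y z w) (hxy : G.Adj x y) (hzw : G.Adj z w) (hxz : x ≠ z)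
    (hyw : y ≠ w) : [x, z, y, w].Nodup := by
  have hxw := h.ne_fourth hxy.ne
  have hyz := h.flip.ne_fourth hxy.ne.symm
  simp [hxz, hxy.ne, hxw, hyz.symm, hzw.ne, hyw]

section twinSwap

variable [DecidableEq V]

theorem adj_twinSwap_of_adj_left (h : MatchedTwins G x y z w) (hxy : G.Adj x y)
    (hzw : G.Adj z w) (hxz : x ≠ z) (hyw : y ≠ w) {v : V} (hv : G.Adj x v) :
    G.Adj (twinSwap x y z w x) (twinSwap x y z w v) := by
  have hxw := h.ne_fourth hxy.ne
  have hyz := h.flip.ne_fourth hxy.ne.symm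
  rw [twinSwap_apply_left hxy.ne hxw]
  by_cases hvy : v = y
  · subst hvy
    rwa [← twinSwap_flip (h.nodup hxy hzw hxz hyw), twinSwap_apply_left hxy.ne.symm hyz]
  by_cases hvz : v = z
  · subst hvz
    rw [← twinSwap_comm, twinSwap_apply_left hzw.ne hyz.symm]
    exact h.adj_third hxy.ne hxz
  have hvw : v ≠ w := by rintro rfl; exact h.not_adj_fourth hyw hv
  have hvx : v ≠ x := hv.ne.symm
  rw [twinSwap_apply_of_ne hvx hvy hvz hvw]
  exact (h.adj_iff_adj_of_ne hvx hvy hvz hvw).1 hv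

theorem adj_twinSwap (h : MatchedTwins G x y z w) (hxy : G.Adj x y) (hzw : G.Adj z w)
    (hxz : x ≠ z) (hyw : y ≠ w) {u v : V} (huv : G.Adj u v) :
    G.Adj (twinSwap x y z w u) (twinSwap x y z w v) := by
  have key : ∀ {u v}, u = x ∨ u = y ∨ u = z ∨ u = w → G.Adj u v →
      G.Adj (twinSwap x y z w u) (twinSwap x y z w v) := by
    rintro u v (rfl | rfl | rfl | rfl) huv
    · exact h.adj_twinSwap_of_adj_left hxy hzw hxz hyw huv
    · rw [← twinSwap_flip (h.nodup hxy hzw hxz hyw)]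
      exact h.flip.adj_twinSwap_of_adj_left hxy.symm hzw.symm hyw hxz huv
    · rw [← twinSwap_comm]
      exact h.symm.adj_twinSwap_of_adj_left hzw hxy hxz.symm hyw.symm huv
    · rw [← twinSwap_comm, ← twinSwap_flip (h.symm.nodup hzw hxy hxz.symm hyw.symm)]
      exact h.symm.flip.adj_twinSwap_of_adj_left hzw.symm hxy.symm hyw.symm hxz.symm huv
  by_cases hu : u = x ∨ u = y ∨ u = z ∨ u = w
  · exact key hu huv
  by_cases hv : v = x ∨ v = y ∨ v = z ∨ v = w
  · exact (key hv huv.symm).symm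
  simp only [not_or] at hu hv
  obtain ⟨hux, huy, huz, huw⟩ := hu
  obtain ⟨hvx, hvy, hvz, hvw⟩ := hv
  rwa [twinSwap_apply_of_ne hux huy huz huw, twinSwap_apply_of_ne hvx hvy hvz hvw]

def twinSwapIso (h : MatchedTwins G x y z w) (hxy : G.Adj x y) (hzw : G.Adj z w)
    (hxz : x ≠ z) (hyw : y ≠ w) : G ≃g G where
  toEquiv := twinSwap x y z w
  map_rel_iff' := by
    refine ⟨fun huv ↦ ?_, h.adj_twinSwap hxy hzw hxz hyw⟩
    have hinv := twinSwap_involutive (h.nodup hxy hzw hxz hyw)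
    simpa only [hinv _] using h.adj_twinSwap hxy hzw hxz hyw huv

theorem bijOn_twinSwapIso_pair (h : MatchedTwins G x y z w) (hxy : G.Adj x y)
    (hzw : G.Adj z w) (hxz : x ≠ z) (hyw : y ≠ w) :
    Set.BijOn (h.twinSwapIso hxy hzw hxz hyw) {x, y} {z, w} := by
  have hx : twinSwap x y z w x = z := twinSwap_apply_left hxy.ne (h.ne_fourth hxy.ne)
  have hy : twinSwap x y z w y = w := by
    rw [← twinSwap_flip (h.nodup hxy hzw hxz hyw)]
    exact twinSwap_apply_left hxy.ne.symm (h.flip.ne_fourth hxy.ne.symm)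
  simpa [twinSwapIso, Set.image_pair, hx, hy] using (twinSwap x y z w).bijOn_image (s := {x, y})

end twinSwap

end MatchedTwins

theorem stmt4_general {V : Type*} (G : SimpleGraph V) (x y z w : V)
    (hxy : G.Adj x y) (hzw : G.Adj z w) (hne : (x, y) ≠ (z, w))
    (hmt : MatchedTwins G x y z w) :
    Nonempty ((SimpleGraph.induce ({x, y}ᶜ : Set V) G) ≃g
      (SimpleGraph.induce ({z, w}ᶜ : Set V) G)) := by
  classical
  have hxz : x ≠ z := fun e ↦ hne (Prod.ext e ((hmt.eq_third_iff_eq_fourth hxy).1 e))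
  have hyw : y ≠ w := fun e ↦ hne (Prod.ext ((hmt.eq_third_iff_eq_fourth hxy).2 e) e)
  let φ := hmt.twinSwapIso hxy hzw hxz hyw
  exact ⟨φ.induce ((hmt.bijOn_twinSwapIso_pair hxy hzw hxz hyw).compl φ.bijective)⟩

theorem stmt4 {V : Type*} [Fintype V] (G : SimpleGraph V) (x y z w : V)
    (hxy : G.Adj x y) (hzw : G.Adj z w) (hne : (x, y) ≠ (z, w))
    (hmt : MatchedTwins G x y z w) :
    Nonempty ((SimpleGraph.induce ({x, y}ᶜ : Set V) G) ≃g
      (SimpleGraph.induce ({z, w}ᶜ : Set V) G)) :=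
  stmt4_general G x y z w hxy hzw hne hmt
end

section
/- Let G be a graph and let (x,y) and (z,w) be two distinct comparable ordered pairs of vertices of G with (x,y) ~nt (z,w). Then the graphs G − {x,y} and G − {z,w} are isomorphic. -/
open SimpleGraph

/-!
The map sending `z ↦ x`, `w ↦ y` and fixing every other vertex is an isomorphism
`G − {x, y} ≃ G − {z, w}`. The nested-twin conditions say that `x` and `z`, and likewise `y`
and `w`, have the same neighbours among the remaining vertices, while comparability makes `xy`
and `zw` edges as soon as `x ≠ y` (equivalently `z ≠ w`). Comparability also excludes the
collision `x = w` unless `z = y`, which is what keeps the map injective and its image away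
from `{z, w}`.
-/
noncomputable def SimpleGraph.induceIsoOfBijOn {V W : Type*} {G : SimpleGraph V}
    {G' : SimpleGraph W} {s : Set V} {t : Set W} (f : V → W) (hf : Set.BijOn f s t)
    (hadj : ∀ a ∈ s, ∀ b ∈ s, G'.Adj (f a) (f b) ↔ G.Adj a b) :
    G.induce s ≃g G'.induce t where
  toEquiv := hf.equiv f
  map_rel_iff' {a b} := hadj a a.2 b b.2

section

variable {V : Type*} {G : SimpleGraph V} {x y z w : V}

lemma ComparablePair.adj (h : ComparablePair G x y) (hne : x ≠ y) : G.Adj x y :=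
  ((h (Set.mem_insert x _)).resolve_left hne).symm

namespace NestedTwins

lemma symm (h : NestedTwins G x y z w) : NestedTwins G z w x y :=
  ⟨h.1.symm, h.2.symm⟩

lemma adj_left_iff (h : NestedTwins G x y z w) {v : V} (hvy : v ≠ y) (hvw : v ≠ w) :
    G.Adj x v ↔ G.Adj z v := by
  simpa [hvy, hvw] using Set.ext_iff.mp h.1 v

lemma adj_right_iff (h : NestedTwins G x y z w) {v : V} (hvx : v ≠ x) (hvy : v ≠ y)
    (hvz : v ≠ z) (hvw : v ≠ w) : G.Adj y v ↔ G.Adj w v := by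
  simpa [closedNbhd, hvx, hvy, hvz, hvw] using Set.ext_iff.mp h.2 v

lemma eq_of_eq (h : NestedTwins G x y z w) (hxy : x = y) : z = w := by
  subst hxy
  by_contra hzw
  have hxw : G.Adj x w := by
    simpa [closedNbhd, Ne.symm hzw] using
      (Set.ext_iff.mp h.2 w).mpr (by simp [closedNbhd, Ne.symm hzw])
  exact ((Set.ext_iff.mp h.1 w).mp ⟨hxw, hxw.ne'⟩).2 rfl

lemma eq_iff_eq (h : NestedTwins G x y z w) : x = y ↔ z = w :=
  ⟨h.eq_of_eq, h.symm.eq_of_eq⟩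

lemma eq_of_eq_cross (h : NestedTwins G x y z w) (hzw : ComparablePair G z w) (hxw : x = w) :
    z = y := by
  by_contra hzy
  by_cases hzw' : z = w
  · exact hzy (hzw'.trans (hxw.symm.trans (h.eq_iff_eq.mpr hzw')))
  · have hxz : G.Adj x z := hxw ▸ (hzw.adj hzw').symm
    exact G.loopless.irrefl z ((h.adj_left_iff hzy hzw').mp hxz)

lemma eq_cross_iff (h : NestedTwins G x y z w) (hxy : ComparablePair G x y)
    (hzw : ComparablePair G z w) : x = w ↔ z = y :=
  ⟨h.eq_of_eq_cross hzw, h.symm.eq_of_eq_cross hxy⟩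

end NestedTwins

variable [DecidableEq V]

def pairMap (x y z w v : V) : V :=
  if v = z then x else if v = w then y else v

lemma pairMap_eq_self {v : V} (hvz : v ≠ z) (hvw : v ≠ w) : pairMap x y z w v = v := by
  simp [pairMap, hvz, hvw]

namespace NestedTwins

lemma mapsTo_pairMap (h : NestedTwins G x y z w) (hxy : ComparablePair G x y)
    (hzw : ComparablePair G z w) : Set.MapsTo (pairMap x y z w) {x, y}ᶜ {z, w}ᶜ := by
  have hcross := h.eq_cross_iff hxy hzw
  intro v hv
  simp only [Set.mem_compl_iff, Set.mem_insert_iff, Set.mem_singleton_iff, not_or, pairMap] at *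
  grind

lemma leftInvOn_pairMap (h : NestedTwins G x y z w) :
    Set.LeftInvOn (pairMap z w x y) (pairMap x y z w) {x, y}ᶜ := by
  have hdiag := h.eq_iff_eq
  intro v hv
  simp only [Set.mem_compl_iff, Set.mem_insert_iff, Set.mem_singleton_iff, not_or, pairMap] at *
  grind

lemma bijOn_pairMap (h : NestedTwins G x y z w) (hxy : ComparablePair G x y)
    (hzw : ComparablePair G z w) : Set.BijOn (pairMap x y z w) {x, y}ᶜ {z, w}ᶜ :=
  Set.InvOn.bijOn ⟨h.leftInvOn_pairMap, h.symm.leftInvOn_pairMap⟩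
    (h.mapsTo_pairMap hxy hzw) (h.symm.mapsTo_pairMap hzw hxy)

lemma adj_pairMap_left_iff (h : NestedTwins G x y z w) {a b : V} (hbx : b ≠ x) (hby : b ≠ y)
    (hbz : b ≠ z) (hbw : b ≠ w) : G.Adj (pairMap x y z w a) b ↔ G.Adj a b := by
  unfold pairMap
  split_ifs with haz haw
  · exact haz ▸ h.adj_left_iff hby hbw
  · exact haw ▸ h.adj_right_iff hbx hby hbz hbw
  · rfl

lemma adj_pairMap_iff (h : NestedTwins G x y z w) (hxy : ComparablePair G x y)
    (hzw : ComparablePair G z w) {a b : V} (ha : a ∉ ({x, y} : Set V))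
    (hb : b ∉ ({x, y} : Set V)) :
    G.Adj (pairMap x y z w a) (pairMap x y z w b) ↔ G.Adj a b := by
  simp only [Set.mem_insert_iff, Set.mem_singleton_iff, not_or] at ha hb
  by_cases hb' : b = z ∨ b = w
  · by_cases ha' : a = z ∨ a = w
    · obtain rfl | hzw' := eq_or_ne z w
      · obtain rfl : a = b := by simp_all
        simp
      have hxy' : x ≠ y := mt h.eq_iff_eq.mp hzw'
      rcases ha' with rfl | rfl <;> rcases hb' with rfl | rfl <;>
        simp [pairMap, hzw'.symm, hxy.adj hxy', hzw.adj hzw', (hxy.adj hxy').symm,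
          (hzw.adj hzw').symm]
    · obtain ⟨haz, haw⟩ := not_or.mp ha'
      rw [pairMap_eq_self haz haw, G.adj_comm, h.adj_pairMap_left_iff ha.1 ha.2 haz haw,
        G.adj_comm]
  · obtain ⟨hbz, hbw⟩ := not_or.mp hb'
    rw [pairMap_eq_self hbz hbw, h.adj_pairMap_left_iff hb.1 hb.2 hbz hbw]

end NestedTwins

end

theorem stmt5_general {V : Type*} (G : SimpleGraph V) (x y z w : V)
    (hxy : ComparablePair G x y) (hzw : ComparablePair G z w)
    (hnt : NestedTwins G x y z w) :
    Nonempty ((SimpleGraph.induce ({x, y}ᶜ : Set V) G) ≃g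
      (SimpleGraph.induce ({z, w}ᶜ : Set V) G)) := by
  classical
  exact ⟨induceIsoOfBijOn _ (hnt.bijOn_pairMap hxy hzw)
    fun a ha b hb => hnt.adj_pairMap_iff hxy hzw ha hb⟩

theorem stmt5 {V : Type*} [Fintype V] (G : SimpleGraph V) (x y z w : V)
    (hxy : ComparablePair G x y) (hzw : ComparablePair G z w)
    (hne : (x, y) ≠ (z, w)) (hnt : NestedTwins G x y z w) :
    Nonempty ((SimpleGraph.induce ({x, y}ᶜ : Set V) G) ≃g
      (SimpleGraph.induce ({z, w}ᶜ : Set V) G)) :=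
  stmt5_general G x y z w hxy hzw hnt
end

section
/- Let H be a square root of a connected graph G with at least three vertices such that H − S is isomorphic to pK_1 + qK_2 for a set S ⊆ V(G). If a_1b_1 and a_2b_2 are two distinct S-matching edges of type 1 in H such that N_H(b_1) ∩ S = N_H(b_2) ∩ S ≠ ∅, then (a_1,b_1) and (a_2,b_2) are comparable pairs of G, i.e., N_G[a_1] ⊆ N_G[b_1] and N_G[a_2] ⊆ N_G[b_2]. -/
open SimpleGraph

/-- In `H²` the closed neighbourhood of a pendant vertex `a` of `H` is `{a} ∪ N_H[b]` for its
unique neighbour `b`, which lies inside `N_{H²}[b]`. -/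
theorem comparablePair_squareGraph_of_pendant {V : Type*} {H : SimpleGraph V} {a b : V}
    (hab : H.Adj a b) (hpendant : ∀ x, H.Adj a x → x = b) :
    ComparablePair (squareGraph H) a b := by
  rintro x (rfl | ⟨hax, hdirect | ⟨w, haw, hwx⟩⟩)
  · exact Or.inr ⟨hab.ne', Or.inl hab.symm⟩
  · exact Or.inl (hpendant x hdirect)
  · obtain rfl := hpendant w haw
    by_cases hxw : x = w
    · exact Or.inl hxw
    · exact Or.inr ⟨Ne.symm hxw, Or.inl hwx⟩

theorem Type1Edge.eq_of_adj {V : Type*} {H : SimpleGraph V} {S : Set V} {a b x : V}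
    (hmatch : ∀ u v w : ↥Sᶜ, (H.induce Sᶜ).Adj u v → (H.induce Sᶜ).Adj u w → v = w)
    (h : Type1Edge H S a b) (hax : H.Adj a x) : x = b := by
  obtain ⟨haS, hbS, hab, hnoS, -⟩ := h
  have hxS : x ∉ S := fun hxS => (Set.eq_empty_iff_forall_notMem.1 hnoS) x ⟨hax, hxS⟩
  exact congrArg Subtype.val (hmatch ⟨a, haS⟩ ⟨x, hxS⟩ ⟨b, hbS⟩ hax hab)

theorem Type1Edge.comparablePair_squareGraph {V : Type*} {H : SimpleGraph V} {S : Set V}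
    {a b : V}
    (hmatch : ∀ u v w : ↥Sᶜ, (H.induce Sᶜ).Adj u v → (H.induce Sᶜ).Adj u w → v = w)
    (h : Type1Edge H S a b) : ComparablePair (squareGraph H) a b :=
  comparablePair_squareGraph_of_pendant h.2.2.1 fun _ hax => h.eq_of_adj hmatch hax

theorem stmt10_general {V : Type*} (G H : SimpleGraph V) (S : Set V) (p q : ℕ)
    (hsq : G = squareGraph H)
    (hHS : IsDisjUnionK1K2 (SimpleGraph.induce Sᶜ H) p q)
    (a₁ b₁ a₂ b₂ : V)
    (h₁ : Type1Edge H S a₁ b₁) (h₂ : Type1Edge H S a₂ b₂) :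
    ComparablePair G a₁ b₁ ∧ ComparablePair G a₂ b₂ := by
  subst hsq
  exact ⟨h₁.comparablePair_squareGraph hHS.1, h₂.comparablePair_squareGraph hHS.1⟩

theorem stmt10 {V : Type*} [Fintype V] (G H : SimpleGraph V) (S : Set V) (p q : ℕ)
    (hconn : G.Connected) (hcard : 3 ≤ Fintype.card V)
    (hsq : G = squareGraph H)
    (hHS : IsDisjUnionK1K2 (SimpleGraph.induce Sᶜ H) p q)
    (a₁ b₁ a₂ b₂ : V)
    (h₁ : Type1Edge H S a₁ b₁) (h₂ : Type1Edge H S a₂ b₂)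
    (hne : s(a₁, b₁) ≠ s(a₂, b₂))
    (heq : H.neighborSet b₁ ∩ S = H.neighborSet b₂ ∩ S)
    (hnonempty : (H.neighborSet b₁ ∩ S).Nonempty) :
    ComparablePair G a₁ b₁ ∧ ComparablePair G a₂ b₂ :=
  stmt10_general G H S p q hsq hHS a₁ b₁ a₂ b₂ h₁ h₂
end

section
/- Let H be a square root of a connected graph G with at least three vertices such that H − S is isomorphic to pK_1 + qK_2 for a set S ⊆ V(G). If a_1b_1 and a_2b_2 are two distinct S-matching edges of type 2 in H such that N_H(a_1) ∩ S = N_H(a_2) ∩ S and N_H(b_1) ∩ S = N_H(b_2) ∩ S, then (a_1,b_1) ~mt (a_2,b_2) in G. -/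
open SimpleGraph

/-!
Since `H - S` has maximum degree one, `b` is the only neighbour of `a` outside `S` and vice
versa. Hence in `H²` the closed neighbourhood of `a`, with `b` removed, consists of the
`S`-neighbours of `a` and of `b` and the `H`-neighbours of the `S`-neighbours of `a`; `b` itself
does not reappear among the latter because a type 2 edge has no common `S`-neighbour. This
description depends only on `N_H(a) ∩ S` and `N_H(b) ∩ S`, so edges with equal traces on `S`
are matched twins.
-/

section

variable {V : Type*} {H : SimpleGraph V} {S : Set V}

lemma eq_of_adj_of_isDisjUnionK1K2_induce_compl {p q : ℕ}
    (hHS : IsDisjUnionK1K2 (H.induce Sᶜ) p q) ⦃u v w : V⦄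
    (hu : u ∉ S) (hv : v ∉ S) (hw : w ∉ S) (huv : H.Adj u v) (huw : H.Adj u w) : v = w :=
  congrArg Subtype.val (hHS.1 ⟨u, hu⟩ ⟨v, hv⟩ ⟨w, hw⟩ huv huw)

lemma Type2Edge.symm {a b : V} (h : Type2Edge H S a b) : Type2Edge H S b a := by
  obtain ⟨haS, hbS, hab, hNa, hNb, hcommon⟩ := h
  exact ⟨hbS, haS, hab.symm, hNb, hNa, by rwa [Set.inter_comm (H.neighborSet b)]⟩

lemma closedNbhd_squareGraph_diff_of_type2Edge
    (hdeg : ∀ ⦃u v w⦄, u ∉ S → v ∉ S → w ∉ S → H.Adj u v → H.Adj u w → v = w)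
    {a b : V} (h : Type2Edge H S a b) :
    closedNbhd (squareGraph H) a \ {b} =
      (H.neighborSet a ∩ S) ∪ (H.neighborSet b ∩ S) ∪
        ⋃ s ∈ H.neighborSet a ∩ S, H.neighborSet s := by
  obtain ⟨haS, hbS, hab, ⟨sa, hsa⟩, -, hcommon⟩ := h
  ext v
  simp only [closedNbhd, squareGraph, mem_neighborSet, Set.mem_sdiff, Set.mem_insert_iff,
    Set.mem_singleton_iff, Set.mem_union, Set.mem_iUnion, Set.mem_inter_iff]
  constructor
  · rintro ⟨rfl | ⟨hav, hav' | ⟨w, haw, hwv⟩⟩, hvb⟩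
    · exact Or.inr ⟨sa, hsa, hsa.1.symm⟩
    · by_cases hvS : v ∈ S
      · exact Or.inl (Or.inl ⟨hav', hvS⟩)
      · exact absurd (hdeg haS hvS hbS hav' hab) hvb
    · by_cases hwS : w ∈ S
      · exact Or.inr ⟨w, ⟨haw, hwS⟩, hwv⟩
      obtain rfl : w = b := hdeg haS hwS hbS haw hab
      by_cases hvS : v ∈ S
      · exact Or.inl (Or.inr ⟨hwv, hvS⟩)
      · exact absurd (hdeg hbS hvS haS hwv hab.symm).symm hav
  · rintro ((⟨hav, hvS⟩ | ⟨hbv, hvS⟩) | ⟨s, ⟨has, hsS⟩, hsv⟩)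
    · exact ⟨Or.inr ⟨(hvS.ne_of_notMem haS).symm, Or.inl hav⟩, hvS.ne_of_notMem hbS⟩
    · exact ⟨Or.inr ⟨(hvS.ne_of_notMem haS).symm, Or.inr ⟨b, hab, hbv⟩⟩,
        hvS.ne_of_notMem hbS⟩
    · have hvb : v ≠ b := by
        rintro rfl
        exact (Set.eq_empty_iff_forall_notMem.mp hcommon) s ⟨⟨has, hsv.symm⟩, hsS⟩
      by_cases hva : v = a
      · exact ⟨Or.inl hva, hvb⟩
      · exact ⟨Or.inr ⟨Ne.symm hva, Or.inr ⟨s, has, hsv⟩⟩, hvb⟩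

end

theorem stmt13_general {V : Type*} (G H : SimpleGraph V) (S : Set V) (p q : ℕ)
    (hsq : G = squareGraph H)
    (hHS : IsDisjUnionK1K2 (SimpleGraph.induce Sᶜ H) p q)
    (a₁ b₁ a₂ b₂ : V)
    (h₁ : Type2Edge H S a₁ b₁) (h₂ : Type2Edge H S a₂ b₂)
    (heqa : H.neighborSet a₁ ∩ S = H.neighborSet a₂ ∩ S)
    (heqb : H.neighborSet b₁ ∩ S = H.neighborSet b₂ ∩ S) :
    MatchedTwins G a₁ b₁ a₂ b₂ := by
  subst hsq
  have hdeg := eq_of_adj_of_isDisjUnionK1K2_induce_compl hHS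
  constructor
  · rw [closedNbhd_squareGraph_diff_of_type2Edge hdeg h₁,
      closedNbhd_squareGraph_diff_of_type2Edge hdeg h₂, heqa, heqb]
  · rw [closedNbhd_squareGraph_diff_of_type2Edge hdeg h₁.symm,
      closedNbhd_squareGraph_diff_of_type2Edge hdeg h₂.symm, heqa, heqb]

theorem stmt13 {V : Type*} [Fintype V] (G H : SimpleGraph V) (S : Set V) (p q : ℕ)
    (hconn : G.Connected) (hcard : 3 ≤ Fintype.card V)
    (hsq : G = squareGraph H)
    (hHS : IsDisjUnionK1K2 (SimpleGraph.induce Sᶜ H) p q)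
    (a₁ b₁ a₂ b₂ : V)
    (h₁ : Type2Edge H S a₁ b₁) (h₂ : Type2Edge H S a₂ b₂)
    (hne : s(a₁, b₁) ≠ s(a₂, b₂))
    (heqa : H.neighborSet a₁ ∩ S = H.neighborSet a₂ ∩ S)
    (heqb : H.neighborSet b₁ ∩ S = H.neighborSet b₂ ∩ S) :
    MatchedTwins G a₁ b₁ a₂ b₂ :=
  stmt13_general G H S p q hsq hHS a₁ b₁ a₂ b₂ h₁ h₂ heqa heqb
end

section
/- Let H be a square root of a connected graph G with at least three vertices such that H − S is isomorphic to pK_1 + qK_2 for a set S ⊆ V(G). If a_1b_1 and a_2b_2 are two distinct S-matching edges of type 2 in H such that N_H(a_1) ∩ S = N_H(a_2) ∩ S and N_H(b_1) ∩ S = N_H(b_2) ∩ S, then it is not the case that (a_1,b_1) ~nt (a_2,b_2) in G. -/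
open SimpleGraph

/-
Since `H − S` is a matching, two distinct `S`-matching edges `a₁b₁`, `a₂b₂` share no endpoint,
so `a₂ ∉ {a₁, b₁}`. The vertices `a₁` and `a₂` have a common neighbour in `S`, hence are adjacent
in `G = H²`. Nested twins would then put `a₂ ∈ N_G(a₁) \ {b₁} = N_G(a₂) \ {b₂}`, a loop.
-/

theorem IsDisjUnionK1K2.eq_of_adj_of_adj_of_induce_compl {V : Type*} {H : SimpleGraph V}
    {S : Set V} {p q : ℕ} (hHS : IsDisjUnionK1K2 (H.induce Sᶜ) p q) {x y z : V}
    (hx : x ∉ S) (hy : y ∉ S) (hz : z ∉ S) (hxy : H.Adj x y) (hxz : H.Adj x z) : y = z :=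
  congrArg Subtype.val (hHS.1 ⟨x, hx⟩ ⟨y, hy⟩ ⟨z, hz⟩ hxy hxz)

theorem IsDisjUnionK1K2.ne_of_adj_of_induce_compl {V : Type*} {H : SimpleGraph V}
    {S : Set V} {p q : ℕ} (hHS : IsDisjUnionK1K2 (H.induce Sᶜ) p q) {a₁ b₁ a₂ b₂ : V}
    (ha₁ : a₁ ∉ S) (hb₁ : b₁ ∉ S) (hb₂ : b₂ ∉ S) (hab₁ : H.Adj a₁ b₁) (hab₂ : H.Adj a₂ b₂)
    (hne : s(a₁, b₁) ≠ s(a₂, b₂)) : a₁ ≠ a₂ := by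
  rintro rfl
  exact hne (by rw [hHS.eq_of_adj_of_adj_of_induce_compl ha₁ hb₁ hb₂ hab₁ hab₂])

theorem squareGraph_adj_of_adj_of_adj {V : Type*} {H : SimpleGraph V} {u v w : V}
    (huv : u ≠ v) (huw : H.Adj u w) (hwv : H.Adj w v) : (squareGraph H).Adj u v :=
  ⟨huv, Or.inr ⟨w, huw, hwv⟩⟩

theorem NestedTwins.not_adj {V : Type*} {G : SimpleGraph V} {x y z w : V}
    (h : NestedTwins G x y z w) (hzy : z ≠ y) : ¬ G.Adj x z := by
  intro hxz
  have hz : z ∈ G.neighborSet z \ {w} := h.1 ▸ ⟨hxz, hzy⟩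
  exact G.irrefl hz.1

theorem stmt14_general {V : Type*} (G H : SimpleGraph V) (S : Set V) (p q : ℕ)
    (hsq : G = squareGraph H)
    (hHS : IsDisjUnionK1K2 (SimpleGraph.induce Sᶜ H) p q)
    (a₁ b₁ a₂ b₂ : V)
    (h₁ : Type2Edge H S a₁ b₁) (h₂ : Type2Edge H S a₂ b₂)
    (hne : s(a₁, b₁) ≠ s(a₂, b₂))
    (heqa : H.neighborSet a₁ ∩ S = H.neighborSet a₂ ∩ S) :
    ¬ NestedTwins G a₁ b₁ a₂ b₂ := by
  obtain ⟨ha₁, hb₁, hab₁, ⟨s, hs₁, hsS⟩, -, -⟩ := h₁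
  obtain ⟨-, hb₂, hab₂, -, -, -⟩ := h₂
  have ha₁a₂ : a₁ ≠ a₂ := hHS.ne_of_adj_of_induce_compl ha₁ hb₁ hb₂ hab₁ hab₂ hne
  have hb₁a₂ : b₁ ≠ a₂ := by
    refine hHS.ne_of_adj_of_induce_compl hb₁ ha₁ hb₂ hab₁.symm hab₂ ?_
    rwa [Sym2.eq_swap]
  have hs₂ : s ∈ H.neighborSet a₂ ∩ S := heqa ▸ ⟨hs₁, hsS⟩
  intro nt
  exact nt.not_adj hb₁a₂.symm (hsq ▸ squareGraph_adj_of_adj_of_adj ha₁a₂ hs₁ hs₂.1.symm)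

theorem stmt14 {V : Type*} [Fintype V] (G H : SimpleGraph V) (S : Set V) (p q : ℕ)
    (hconn : G.Connected) (hcard : 3 ≤ Fintype.card V)
    (hsq : G = squareGraph H)
    (hHS : IsDisjUnionK1K2 (SimpleGraph.induce Sᶜ H) p q)
    (a₁ b₁ a₂ b₂ : V)
    (h₁ : Type2Edge H S a₁ b₁) (h₂ : Type2Edge H S a₂ b₂)
    (hne : s(a₁, b₁) ≠ s(a₂, b₂))
    (heqa : H.neighborSet a₁ ∩ S = H.neighborSet a₂ ∩ S)
    (heqb : H.neighborSet b₁ ∩ S = H.neighborSet b₂ ∩ S) :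
    ¬ NestedTwins G a₁ b₁ a₂ b₂ :=
  stmt14_general G H S p q hsq hHS a₁ b₁ a₂ b₂ h₁ h₂ hne heqa
end

section
/- Let H be a square root of a connected graph G with at least three vertices such that H − S is isomorphic to pK_1 + qK_2 for a set S ⊆ V(G). If a_1b_1 and a_2b_2 are two distinct S-matching edges of type 3 in H such that N_H(a_1) ∩ S = N_H(a_2) ∩ S and N_H(b_1) ∩ S = N_H(b_2) ∩ S, then a_1 and a_2 are true twins in G, and b_1 and b_2 are true twins in G. -/
open SimpleGraph

/-! Outside `S` every vertex has at most one `H`-neighbour, so a walk of length at most two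
in `H` starting at `a₁` either steps into `S`, where `a₁` and `a₂` have the same neighbours, or
runs along the edge `a₁b₁`. The common neighbour `s ∈ S` of `a₁` and `b₁` is also adjacent to `a₂`,
which puts `a₁` and `b₁` within distance two of `a₂`. Hence `N_{H²}[a₁] ⊆ N_{H²}[a₂]`, and the rest
follows by symmetry. -/

lemma SimpleGraph.adj_of_neighborSet_inter_eq {V : Type*} {H : SimpleGraph V} {S : Set V}
    {a a' w : V} (h : H.neighborSet a ∩ S = H.neighborSet a' ∩ S) (hw : w ∈ S)
    (ha : H.Adj a w) : H.Adj a' w :=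
  (h ▸ ⟨ha, hw⟩ : w ∈ H.neighborSet a' ∩ S).1

lemma IsDisjUnionK1K2.eq_of_adj_of_adj {V : Type*} {H : SimpleGraph V} {S : Set V} {p q : ℕ}
    (hHS : IsDisjUnionK1K2 (H.induce Sᶜ) p q) ⦃x y z : V⦄ (hx : x ∉ S) (hy : y ∉ S)
    (hz : z ∉ S) (hxy : H.Adj x y) (hxz : H.Adj x z) : y = z :=
  congrArg Subtype.val (hHS.1 ⟨x, hx⟩ ⟨y, hy⟩ ⟨z, hz⟩ hxy hxz)

namespace Type3Edge

variable {V : Type*} {H : SimpleGraph V} {S : Set V} {a₁ b₁ a₂ b₂ : V}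

lemma symm (h : Type3Edge H S a₁ b₁) : Type3Edge H S b₁ a₁ := by
  obtain ⟨ha, hb, hab, s, ⟨hsa, hsb⟩, hs⟩ := h
  exact ⟨hb, ha, hab.symm, s, ⟨hsb, hsa⟩, hs⟩

lemma left_ne_left (hS : ∀ ⦃x y z : V⦄, x ∉ S → y ∉ S → z ∉ S → H.Adj x y → H.Adj x z → y = z)
    (h₁ : Type3Edge H S a₁ b₁) (h₂ : Type3Edge H S a₂ b₂)
    (hne : s(a₁, b₁) ≠ s(a₂, b₂)) : a₁ ≠ a₂ := by
  rintro rfl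
  exact hne (by rw [hS h₁.1 h₁.2.1 h₂.2.1 h₁.2.2.1 h₂.2.2.1])

lemma closedNbhd_squareGraph_subset
    (hS : ∀ ⦃x y z : V⦄, x ∉ S → y ∉ S → z ∉ S → H.Adj x y → H.Adj x z → y = z)
    (h₁ : Type3Edge H S a₁ b₁) (hab₂ : H.Adj a₂ b₂)
    (heqa : H.neighborSet a₁ ∩ S = H.neighborSet a₂ ∩ S)
    (heqb : H.neighborSet b₁ ∩ S = H.neighborSet b₂ ∩ S)
    (haa : a₁ ≠ a₂) :
    closedNbhd (squareGraph H) a₁ ⊆ closedNbhd (squareGraph H) a₂ := by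
  obtain ⟨ha₁, hb₁, hab₁, s, ⟨hsa₁, hsb₁⟩, hs⟩ := h₁
  have hsa₂ : H.Adj a₂ s := adj_of_neighborSet_inter_eq heqa hs hsa₁
  rintro v (rfl | ⟨-, hv⟩)
  · exact Or.inr ⟨haa.symm, Or.inr ⟨s, hsa₂, hsa₁.symm⟩⟩
  by_cases hva : v = a₂
  · exact hva ▸ Set.mem_insert _ _
  refine Or.inr ⟨Ne.symm hva, ?_⟩
  rcases hv with hadj | ⟨w, hw₁, hw₂⟩
  · by_cases hvS : v ∈ S
    · exact Or.inl (adj_of_neighborSet_inter_eq heqa hvS hadj)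
    · obtain rfl := hS ha₁ hb₁ hvS hab₁ hadj
      exact Or.inr ⟨s, hsa₂, hsb₁.symm⟩
  · by_cases hwS : w ∈ S
    · exact Or.inr ⟨w, adj_of_neighborSet_inter_eq heqa hwS hw₁, hw₂⟩
    obtain rfl := hS ha₁ hb₁ hwS hab₁ hw₁
    by_cases hvS : v ∈ S
    · exact Or.inr ⟨b₂, hab₂, adj_of_neighborSet_inter_eq heqb hvS hw₂⟩
    · obtain rfl := hS hb₁ ha₁ hvS hab₁.symm hw₂
      exact Or.inr ⟨s, hsa₂, hsa₁.symm⟩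

lemma closedNbhd_squareGraph_eq
    (hS : ∀ ⦃x y z : V⦄, x ∉ S → y ∉ S → z ∉ S → H.Adj x y → H.Adj x z → y = z)
    (h₁ : Type3Edge H S a₁ b₁) (h₂ : Type3Edge H S a₂ b₂) (hne : s(a₁, b₁) ≠ s(a₂, b₂))
    (heqa : H.neighborSet a₁ ∩ S = H.neighborSet a₂ ∩ S)
    (heqb : H.neighborSet b₁ ∩ S = H.neighborSet b₂ ∩ S) :
    closedNbhd (squareGraph H) a₁ = closedNbhd (squareGraph H) a₂ := by
  have haa : a₁ ≠ a₂ := left_ne_left hS h₁ h₂ hne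
  exact (closedNbhd_squareGraph_subset hS h₁ h₂.2.2.1 heqa heqb haa).antisymm
    (closedNbhd_squareGraph_subset hS h₂ h₁.2.2.1 heqa.symm heqb.symm haa.symm)

end Type3Edge

theorem stmt16_general {V : Type*} (G H : SimpleGraph V) (S : Set V) (p q : ℕ)
    (hsq : G = squareGraph H)
    (hHS : IsDisjUnionK1K2 (SimpleGraph.induce Sᶜ H) p q)
    (a₁ b₁ a₂ b₂ : V)
    (h₁ : Type3Edge H S a₁ b₁) (h₂ : Type3Edge H S a₂ b₂)
    (hne : s(a₁, b₁) ≠ s(a₂, b₂))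
    (heqa : H.neighborSet a₁ ∩ S = H.neighborSet a₂ ∩ S)
    (heqb : H.neighborSet b₁ ∩ S = H.neighborSet b₂ ∩ S) :
    closedNbhd G a₁ = closedNbhd G a₂ ∧ closedNbhd G b₁ = closedNbhd G b₂ := by
  subst hsq
  have hne' : s(b₁, a₁) ≠ s(b₂, a₂) := by rwa [Sym2.eq_swap, Sym2.eq_swap (a := b₂)]
  exact ⟨h₁.closedNbhd_squareGraph_eq hHS.eq_of_adj_of_adj h₂ hne heqa heqb,
    h₁.symm.closedNbhd_squareGraph_eq hHS.eq_of_adj_of_adj h₂.symm hne' heqb heqa⟩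

theorem stmt16 {V : Type*} [Fintype V] (G H : SimpleGraph V) (S : Set V) (p q : ℕ)
    (hconn : G.Connected) (hcard : 3 ≤ Fintype.card V)
    (hsq : G = squareGraph H)
    (hHS : IsDisjUnionK1K2 (SimpleGraph.induce Sᶜ H) p q)
    (a₁ b₁ a₂ b₂ : V)
    (h₁ : Type3Edge H S a₁ b₁) (h₂ : Type3Edge H S a₂ b₂)
    (hne : s(a₁, b₁) ≠ s(a₂, b₂))
    (heqa : H.neighborSet a₁ ∩ S = H.neighborSet a₂ ∩ S)
    (heqb : H.neighborSet b₁ ∩ S = H.neighborSet b₂ ∩ S) :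
    closedNbhd G a₁ = closedNbhd G a₂ ∧ closedNbhd G b₁ = closedNbhd G b₂ :=
  stmt16_general G H S p q hsq hHS a₁ b₁ a₂ b₂ h₁ h₂ hne heqa heqb
end
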